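/- Let N ≥ 2 be an integer and let f = f₀(x,y) + z^N ∈ ℂ[[x,y,z]], where f₀ ∈ ℂ[[x,y]] is Newton nondegenerate, f₀(0,0) = 0, and f₀ is convenient (supp(f₀) contains a point (a,0) on the x-axis and a point (0,b) on the y-axis). Then for every k ∈ ℤ^𝒩, the ideals 𝓘(k) and 𝓖(k) of O_X = ℂ[[x,y,z]]/(f) coincide. -/

import Mathlib

open Pointwise

noncomputable section

open scoped Classical

/-! ### Two-variable Newton polyhedra and Newton nondegeneracy -/

/-- The support of a power series in two variables. -/
def psSupp2 (f : MvPowerSeries (Fin 2) ℂ) : Set (Fin 2 →₀ ℕ) :=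
  {u | MvPowerSeries.coeff u f ≠ 0}

/-- The Newton polyhedron `Γ₊(f₀) = conv(supp f₀ + ℝ²₊)`. -/
def newtonPolyhedron2 (f : MvPowerSeries (Fin 2) ℂ) : Set (Fin 2 → ℝ) :=
  convexHull ℝ (((fun (u : Fin 2 →₀ ℕ) (i : Fin 2) => (u i : ℝ)) '' psSupp2 f) +
    {v : Fin 2 → ℝ | ∀ i, 0 ≤ v i})

/-- A compact face (of any dimension) of `P ⊆ ℝ²`: a nonempty compact exposed face. -/
def IsCompactFace2 (P F : Set (Fin 2 → ℝ)) : Prop :=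
  IsExposed ℝ P F ∧ IsCompact F ∧ F.Nonempty

/-- The value `f_F(z)` of the face polynomial `f_F` (the sum of the terms of `f` with
exponents in `F`) at a point `z ∈ (ℂ*)²`. -/
def faceEval (f : MvPowerSeries (Fin 2) ℂ) (F : Set (Fin 2 → ℝ)) (z : Fin 2 → ℂ) : ℂ :=
  ∑ᶠ u ∈ {u ∈ psSupp2 f | (fun i => ((u i : ℕ) : ℝ)) ∈ F},
    MvPowerSeries.coeff u f * ∏ i, z i ^ (u i)

/-- The value `(∂f_F/∂x_j)(z)` of the `j`-th partial derivative of the face polynomial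
`f_F` at a point `z ∈ (ℂ*)²`. -/
def facePartial (f : MvPowerSeries (Fin 2) ℂ) (F : Set (Fin 2 → ℝ)) (j : Fin 2)
    (z : Fin 2 → ℂ) : ℂ :=
  ∑ᶠ u ∈ {u ∈ psSupp2 f | (fun i => ((u i : ℕ) : ℝ)) ∈ F},
    MvPowerSeries.coeff u f * (u j : ℂ) * ∏ i, z i ^ (u i - if i = j then 1 else 0)

/-- `f₀ ∈ ℂ[[x,y]]` is Newton nondegenerate: for every compact face `F` of `Γ₊(f₀)`,
the polynomials `(f₀)_F, ∂(f₀)_F/∂x, ∂(f₀)_F/∂y` have no common zero in `(ℂ∖{0})²`. -/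
def NewtonNondeg2 (f : MvPowerSeries (Fin 2) ℂ) : Prop :=
  ∀ F, IsCompactFace2 (newtonPolyhedron2 f) F →
    ∀ z : Fin 2 → ℂ, (∀ i, z i ≠ 0) →
      ¬ (faceEval f F z = 0 ∧ ∀ j, facePartial f F j z = 0)

/-! ### Three-variable Newton polyhedra -/

/-- The support of a power series in three variables. -/
def psSupp (f : MvPowerSeries (Fin 3) ℂ) : Set (Fin 3 →₀ ℕ) :=
  {u | MvPowerSeries.coeff u f ≠ 0}

/-- The Newton polyhedron `Γ₊(f) = conv(supp f + ℝ³₊)`. -/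
def newtonPolyhedron (f : MvPowerSeries (Fin 3) ℂ) : Set (Fin 3 → ℝ) :=
  convexHull ℝ (((fun (u : Fin 3 →₀ ℕ) (i : Fin 3) => (u i : ℝ)) '' psSupp f) +
    {v : Fin 3 → ℝ | ∀ i, 0 ≤ v i})

/-- Evaluation of an integral linear functional on `ℝ³`. -/
def leval (l : Fin 3 → ℤ) (x : Fin 3 → ℝ) : ℝ := ∑ i, (l i : ℝ) * x i

/-- The value of the integral functional `l` on an exponent vector `u ∈ ℕ³`. -/
def ldot (l : Fin 3 → ℤ) (u : Fin 3 →₀ ℕ) : ℤ := ∑ i, l i * (u i : ℤ)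

/-- A primitive integral vector. -/
def Primitive (l : Fin 3 → ℤ) : Prop := ∀ d : ℤ, (∀ i, d ∣ l i) → IsUnit d

/-- The set of minimizers of the functional `l` on `P`. -/
def minSet (l : Fin 3 → ℤ) (P : Set (Fin 3 → ℝ)) : Set (Fin 3 → ℝ) :=
  {x ∈ P | ∀ y ∈ P, leval l x ≤ leval l y}

/-- A compact facet of `P`: a compact two-dimensional exposed face. -/
def IsCompactFacet (P F : Set (Fin 3 → ℝ)) : Prop :=
  IsExposed ℝ P F ∧ IsCompact F ∧ Module.finrank ℝ (vectorSpan ℝ F) = 2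

/-- The suspension `f = f₀(x,y) + z^N`. -/
def suspend (f₀ : MvPowerSeries (Fin 2) ℂ) (N : ℕ) : MvPowerSeries (Fin 3) ℂ :=
  fun d =>
    (if d 2 = 0 then
      MvPowerSeries.coeff (Finsupp.equivFunOnFinite.symm ![d 0, d 1]) f₀ else 0) +
    (if d = Finsupp.single (2 : Fin 3) N then 1 else 0)

/-!
Write `f = z^N + g` with `g` free of `z`. Every compact facet of `Γ₊(f)` contains `(0,0,N)`:
if the minimum `m` of `ℓ` on `Γ₊(f)` were `< N ℓ₂`, the functional `N ℓ - (N ℓ₂ - m) z`, which is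
`≥ N m` on `Γ₊(f)`, would force the facet into the plane `z = 0` and hence into a line. So
`ℓ_n(u) ≥ N ℓ_{n,2}` on `supp g`, i.e. `z^N` belongs to every initial form of `f`.

Given an element of `𝓖(k)`, subtract multiples of `f` from a lift `h` to clear all monomials whose
`z`-degree lies in `[N, max k)`, top degree first: clearing degree `d` only creates monomials of
`z`-degree `d - N`. If `h'` is a lift with `ŵt_n(h') ≥ k_n` and `h - h' = a f` with `a ≠ 0`,
pick `p` of minimal `ℓ_n`-weight in `a`, of maximal `z`-degree among those; then `p + (0,0,N)`
survives in `a f`. It has `z`-degree `≥ N`, so it has weight `≥ k_n` whether it comes from `h`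
or from `h'`, and it has the minimal weight `ŵt_n(a f)`. Hence `ŵt_n(h) ≥ k_n`.
-/

open MvPowerSeries

lemma psSupp_add_subset (a b : MvPowerSeries (Fin 3) ℂ) :
    psSupp (a + b) ⊆ psSupp a ∪ psSupp b := by
  intro u hu
  by_contra h
  simp only [Set.mem_union, psSupp, Set.mem_ofPred_eq, not_or, not_not] at h
  exact hu (by rw [map_add, h.1, h.2, add_zero])

lemma psSupp_sub_subset (a b : MvPowerSeries (Fin 3) ℂ) :
    psSupp (a - b) ⊆ psSupp a ∪ psSupp b := by
  intro u hu
  by_contra h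
  simp only [Set.mem_union, psSupp, Set.mem_ofPred_eq, not_or, not_not] at h
  exact hu (by rw [map_sub, h.1, h.2, sub_zero])

lemma psSupp_mul_subset (a b : MvPowerSeries (Fin 3) ℂ) :
    psSupp (a * b) ⊆ psSupp a + psSupp b := by
  intro u hu
  rw [psSupp, Set.mem_ofPred_eq, coeff_mul] at hu
  obtain ⟨⟨p, q⟩, hpq, hne⟩ := Finset.exists_ne_zero_of_sum_ne_zero hu
  exact ⟨p, left_ne_zero_of_mul hne, q, right_ne_zero_of_mul hne,
    Finset.HasAntidiagonal.mem_antidiagonal.mp hpq⟩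

lemma psSupp_X_pow (N : ℕ) : psSupp (X 2 ^ N) = {Finsupp.single 2 N} := by
  ext u
  simp [psSupp, coeff_X_pow]

lemma ldot_add (l : Fin 3 → ℤ) (p q : Fin 3 →₀ ℕ) :
    ldot l (p + q) = ldot l p + ldot l q := by
  simp only [ldot, Finsupp.add_apply, Nat.cast_add, mul_add, Finset.sum_add_distrib]

lemma ldot_single (l : Fin 3 → ℤ) (i : Fin 3) (N : ℕ) :
    ldot l (Finsupp.single i N) = N * l i := by
  rw [ldot, Finset.sum_eq_single i (fun j _ hj => by simp [Finsupp.single_eq_of_ne hj])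
    (by simp)]
  simp [mul_comm]

lemma coord_le_ldot {l : Fin 3 → ℤ} (hl : ∀ i, 0 < l i) (u : Fin 3 →₀ ℕ) (i : Fin 3) :
    (u i : ℤ) ≤ ldot l u :=
  calc (u i : ℤ) ≤ l i * u i := le_mul_of_one_le_left (Int.natCast_nonneg _) (hl i)
    _ ≤ ldot l u := Finset.single_le_sum (f := fun i => l i * (u i : ℤ))
      (fun j _ => mul_nonneg (hl j).le (Int.natCast_nonneg _)) (Finset.mem_univ i)

lemma ldot_nonneg {l : Fin 3 → ℤ} (hl : ∀ i, 0 < l i) (u : Fin 3 →₀ ℕ) : 0 ≤ ldot l u :=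
  (Int.natCast_nonneg _).trans (coord_le_ldot hl u 0)

lemma leval_natCast (l : Fin 3 → ℤ) (u : Fin 3 →₀ ℕ) :
    leval l (fun i => (u i : ℝ)) = ldot l u := by
  simp [leval, ldot]

lemma ldot_ge_of_mem_psSupp_mul {l : Fin 3 → ℤ} {a b : MvPowerSeries (Fin 3) ℂ} {A B : ℤ}
    (ha : ∀ u ∈ psSupp a, A ≤ ldot l u) (hb : ∀ u ∈ psSupp b, B ≤ ldot l u) :
    ∀ u ∈ psSupp (a * b), A + B ≤ ldot l u := by
  intro u hu
  obtain ⟨p, hp, q, hq, rfl⟩ := psSupp_mul_subset a b hu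
  rw [ldot_add]
  exact add_le_add (ha p hp) (hb q hq)

lemma le_sum_mul_of_mem_newtonPolyhedron {f : MvPowerSeries (Fin 3) ℂ} {c : Fin 3 → ℝ}
    (hc : ∀ i, 0 ≤ c i) {r : ℝ} (hr : ∀ u ∈ psSupp f, r ≤ ∑ i, c i * u i) :
    ∀ x ∈ newtonPolyhedron f, r ≤ ∑ i, c i * x i := by
  have hlin : IsLinearMap ℝ fun x : Fin 3 → ℝ => ∑ i, c i * x i :=
    ⟨fun x y => by simp only [Pi.add_apply, mul_add, Finset.sum_add_distrib],
      fun t x => by simp only [Pi.smul_apply, smul_eq_mul, Finset.mul_sum, mul_left_comm]⟩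
  refine convexHull_min ?_ (convex_halfSpace_ge hlin r)
  rintro _ ⟨_, ⟨u, hu, rfl⟩, v, hv, rfl⟩
  have hv' : 0 ≤ ∑ i, c i * v i := Finset.sum_nonneg fun i _ => mul_nonneg (hc i) (hv i)
  show r ≤ ∑ i, c i * (u i + v i)
  simpa only [mul_add, Finset.sum_add_distrib, add_zero] using add_le_add (hr u hu) hv'

lemma natCast_mem_newtonPolyhedron {f : MvPowerSeries (Fin 3) ℂ} {u : Fin 3 →₀ ℕ}
    (hu : u ∈ psSupp f) : (fun i => (u i : ℝ)) ∈ newtonPolyhedron f :=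
  subset_convexHull ℝ _ ⟨_, ⟨u, hu, rfl⟩, 0, fun _ => le_rfl, add_zero _⟩

lemma nonneg_of_mem_newtonPolyhedron {f : MvPowerSeries (Fin 3) ℂ} {x : Fin 3 → ℝ}
    (hx : x ∈ newtonPolyhedron f) (i : Fin 3) : 0 ≤ x i := by
  have := le_sum_mul_of_mem_newtonPolyhedron (c := Pi.single i 1) (r := 0)
    (fun j => by by_cases h : j = i <;> simp [h])
    (fun u _ => Finset.sum_nonneg fun j _ => by by_cases h : j = i <;> simp [h]) x hx
  simpa [Pi.single_apply] using this

lemma collinear_of_subset_line {a b m : ℝ} (hb : b ≠ 0) {S : Set (Fin 3 → ℝ)}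
    (hS : ∀ x ∈ S, x 2 = 0 ∧ a * x 0 + b * x 1 = m) : Collinear ℝ S := by
  rw [collinear_iff_exists_forall_eq_smul_vadd]
  refine ⟨![0, m / b, 0], ![b, -a, 0], fun x hx => ⟨x 0 / b, ?_⟩⟩
  obtain ⟨hx2, hxl⟩ := hS x hx
  ext i
  subst hxl
  fin_cases i <;> simp [hx2]
  · field_simp
  · field_simp
    ring

section XPowAdd

variable {N : ℕ} {g : MvPowerSeries (Fin 3) ℂ}

lemma psSupp_X_pow_add (hg : ∀ q ∈ psSupp g, q 2 = 0) (hN : N ≠ 0) :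
    psSupp (X 2 ^ N + g) = insert (Finsupp.single 2 N) (psSupp g) := by
  have hgN : coeff (Finsupp.single 2 N) g = 0 := by
    by_contra h
    exact hN (by simpa using hg _ h)
  ext u
  by_cases hu : u = Finsupp.single 2 N
  · subst hu
    simp [psSupp, coeff_X_pow, hgN]
  · simp [psSupp, coeff_X_pow, hu]

lemma le_of_mem_newtonPolyhedron_X_pow_add (hg : ∀ q ∈ psSupp g, q 2 = 0) {l : Fin 3 → ℤ}
    (hl : ∀ i, 0 < l i) {m : ℝ} (hm0 : 0 ≤ m) (hm : ∀ q ∈ psSupp g, m ≤ ldot l q) :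
    ∀ x ∈ newtonPolyhedron (X 2 ^ N + g), N * m ≤ N * l 0 * x 0 + N * l 1 * x 1 + m * x 2 := by
  have hl' : ∀ i, (0 : ℝ) ≤ N * l i := fun i => by have := hl i; positivity
  intro x hx
  have := le_sum_mul_of_mem_newtonPolyhedron (c := ![N * l 0, N * l 1, m]) (r := N * m)
    (fun i => by fin_cases i <;> simp [hl', hm0]) (fun u hu => ?_) x hx
  · simpa [Fin.sum_univ_three] using this
  rcases psSupp_add_subset _ _ hu with hu | hu
  · rw [psSupp_X_pow, Set.mem_singleton_iff] at hu
    simp [hu, Fin.sum_univ_three, mul_comm]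
  · have h := mul_le_mul_of_nonneg_left (hm u hu) (Nat.cast_nonneg (α := ℝ) N)
    simp only [ldot, Fin.sum_univ_three, hg u hu] at h
    simp only [Fin.sum_univ_three, hg u hu]
    push_cast at h ⊢
    linarith

lemma ldot_ge_of_not_collinear_minSet (hg : ∀ q ∈ psSupp g, q 2 = 0) (hN : N ≠ 0)
    {l : Fin 3 → ℤ} (hl : ∀ i, 0 < l i)
    (hF : ¬ Collinear ℝ (minSet l (newtonPolyhedron (X 2 ^ N + g)))) :
    ∀ q ∈ psSupp g, N * l 2 ≤ ldot l q := by
  have hsupp := psSupp_X_pow_add hg hN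
  obtain ⟨x₀, hx₀P, hx₀min⟩ : (minSet l (newtonPolyhedron (X 2 ^ N + g))).Nonempty :=
    Set.nonempty_iff_ne_empty.2 fun h => hF (h ▸ collinear_empty ℝ _)
  set m := leval l x₀
  have hm : ∀ q ∈ psSupp (X 2 ^ N + g), m ≤ ldot l q := fun q hq =>
    leval_natCast l q ▸ hx₀min _ (natCast_mem_newtonPolyhedron hq)
  have hmg : ∀ q ∈ psSupp g, m ≤ ldot l q := fun q hq =>
    hm q (hsupp ▸ Set.mem_insert_of_mem _ hq)
  suffices (N * l 2 : ℝ) ≤ m from fun q hq => by exact_mod_cast this.trans (hmg q hq)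
  by_contra! hlt
  have hm0 : 0 ≤ m := Finset.sum_nonneg fun i _ =>
    mul_nonneg (by exact_mod_cast (hl i).le) (nonneg_of_mem_newtonPolyhedron hx₀P i)
  refine hF (collinear_of_subset_line (a := l 0) (b := l 1) (m := m)
    (by exact_mod_cast (hl 1).ne') ?_)
  rintro x ⟨hxP, hxmin⟩
  have hxm : leval l x = m := le_antisymm (hxmin x₀ hx₀P) (hx₀min x hxP)
  have hψ := le_of_mem_newtonPolyhedron_X_pow_add hg hl hm0 hmg x hxP
  have hx2 := nonneg_of_mem_newtonPolyhedron hxP 2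
  simp only [leval, Fin.sum_univ_three] at hxm
  have hx20 : x 2 = 0 := by nlinarith
  exact ⟨hx20, by rw [hx20] at hxm; linarith⟩

lemma coeff_mul_X_two_pow (φ : MvPowerSeries (Fin 3) ℂ) (v : Fin 3 →₀ ℕ) :
    coeff v (φ * X 2 ^ N) = if N ≤ v 2 then coeff (v - Finsupp.single 2 N) φ else 0 := by
  simp only [X_pow_eq, coeff_mul_monomial, mul_one, Finsupp.single_le_iff]

lemma exists_sub_mul_psSupp_coord_ne (hg : ∀ q ∈ psSupp g, q 2 = 0) (hN : 0 < N) {d : ℕ}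
    (hd : N ≤ d) (h : MvPowerSeries (Fin 3) ℂ) :
    ∃ c, ∀ v ∈ psSupp (h - c * (X 2 ^ N + g)), v 2 < d ∨ (d < v 2 ∧ v ∈ psSupp h) := by
  -- `c * z^N` is the part of `h` of `z`-degree `d`
  let c : MvPowerSeries (Fin 3) ℂ := fun v =>
    if v 2 + N = d then coeff (v + Finsupp.single 2 N) h else 0
  have hcX : ∀ v, coeff v (c * X 2 ^ N) = if v 2 = d then coeff v h else 0 := by
    intro v
    rw [coeff_mul_X_two_pow, coeff_apply]
    by_cases hv : N ≤ v 2
    · have hvN : v - Finsupp.single 2 N + Finsupp.single 2 N = v :=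
        tsub_add_cancel_of_le (Finsupp.single_le_iff.2 hv)
      simp only [c, if_pos hv, hvN, Finsupp.tsub_apply, Finsupp.single_eq_same,
        Nat.sub_add_cancel hv]
    · rw [if_neg hv, if_neg (by omega)]
  have hcg : ∀ v ∈ psSupp (c * g), v 2 + N = d := by
    intro v hv
    obtain ⟨p, hp, q, hq, rfl⟩ := psSupp_mul_subset c g hv
    have hp' : p 2 + N = d := by
      by_contra hne
      exact hp (by rw [coeff_apply]; exact if_neg hne)
    simp [hp', hg q hq]
  refine ⟨c, fun v hv => ?_⟩
  have hcoeff : coeff v h - (if v 2 = d then coeff v h else 0) - coeff v (c * g) ≠ 0 := by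
    simpa [psSupp, mul_add, hcX, sub_sub] using hv
  have hcgv : v 2 + N ≠ d → coeff v (c * g) = 0 := fun hvd => by
    by_contra hne
    exact hvd (hcg v hne)
  rcases lt_trichotomy (v 2) d with hlt | rfl | hgt
  · exact Or.inl hlt
  · simp [hcgv (by omega)] at hcoeff
  · refine Or.inr ⟨hgt, ?_⟩
    rwa [if_neg hgt.ne', hcgv (by omega), sub_zero, sub_zero] at hcoeff

lemma exists_sub_mul_psSupp_coord_ge (hg : ∀ q ∈ psSupp g, q 2 = 0) (hN : 0 < N) (Z : ℕ)
    (h : MvPowerSeries (Fin 3) ℂ) :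
    ∃ c, ∀ v ∈ psSupp (h - c * (X 2 ^ N + g)), N ≤ v 2 → Z ≤ v 2 := by
  suffices ∀ j h, (∀ v ∈ psSupp h, N + j ≤ v 2 → Z ≤ v 2) →
      ∃ c, ∀ v ∈ psSupp (h - c * (X 2 ^ N + g)), N ≤ v 2 → Z ≤ v 2 from
    this Z h fun v _ _ => by omega
  intro j
  induction j with
  | zero => exact fun h hh => ⟨0, by simpa using hh⟩
  | succ j ih =>
    intro h hh
    obtain ⟨c₁, hc₁⟩ := exists_sub_mul_psSupp_coord_ne hg hN (d := N + j) (by omega) h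
    obtain ⟨c₂, hc₂⟩ := ih (h - c₁ * (X 2 ^ N + g)) fun v hv hvj => by
      rcases hc₁ v hv with hlt | ⟨hgt, hvh⟩
      · omega
      · exact hh v hvh (by omega)
    exact ⟨c₁ + c₂, by rwa [add_mul, ← sub_sub]⟩

lemma exists_ldot_min_coord_max {l : Fin 3 → ℤ} (hl : ∀ i, 0 < l i)
    {a : MvPowerSeries (Fin 3) ℂ} (ha : a ≠ 0) :
    ∃ p ∈ psSupp a, (∀ q ∈ psSupp a, ldot l p ≤ ldot l q) ∧
      ∀ q ∈ psSupp a, ldot l q = ldot l p → q 2 ≤ p 2 := by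
  obtain ⟨u, hu⟩ : ∃ u, u ∈ psSupp a := by
    by_contra! h
    exact ha (ext fun u => by simpa [psSupp] using h u)
  obtain ⟨w, ⟨p₀, hp₀, rfl⟩, hw⟩ := Int.exists_least_of_bdd
    (P := fun w => ∃ p ∈ psSupp a, ldot l p = w)
    ⟨0, fun _ ⟨p, _, hp⟩ => hp ▸ ldot_nonneg hl p⟩ ⟨_, u, hu, rfl⟩
  let P : ℕ → Prop := fun m => ∃ q ∈ psSupp a, ldot l q = ldot l p₀ ∧ q 2 = m
  have hbound : ∀ q, ldot l q = ldot l p₀ → q 2 ≤ (ldot l p₀).toNat := fun q hq => by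
    have := coord_le_ldot hl q 2
    omega
  obtain ⟨p, hp, hpw, hp2⟩ : P (Nat.findGreatest P (ldot l p₀).toNat) :=
    Nat.findGreatest_spec (hbound p₀ rfl) ⟨p₀, hp₀, rfl, rfl⟩
  refine ⟨p, hp, fun q hq => hpw ▸ hw _ ⟨q, hq, rfl⟩, fun q hq hqw => ?_⟩
  rw [hp2]
  exact Nat.le_findGreatest (hbound q (hqw.trans hpw)) ⟨q, hq, hqw.trans hpw, rfl⟩

lemma coeff_add_single_mul_X_pow_add (hg : ∀ q ∈ psSupp g, q 2 = 0) (hN : 0 < N)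
    {l : Fin 3 → ℤ} (hgw : ∀ q ∈ psSupp g, N * l 2 ≤ ldot l q)
    {a : MvPowerSeries (Fin 3) ℂ} {p : Fin 3 →₀ ℕ}
    (hmin : ∀ q ∈ psSupp a, ldot l p ≤ ldot l q)
    (hmax : ∀ q ∈ psSupp a, ldot l q = ldot l p → q 2 ≤ p 2) :
    coeff (p + Finsupp.single 2 N) (a * (X 2 ^ N + g)) = coeff p a := by
  have hag : coeff (p + Finsupp.single 2 N) (a * g) = 0 := by
    by_contra hne
    obtain ⟨q, hq, r, hr, hqr⟩ := psSupp_mul_subset a g hne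
    have hw := congrArg (ldot l) hqr
    have hz := congrArg (· 2) hqr
    simp only [ldot_add, ldot_single, Finsupp.add_apply, Finsupp.single_eq_same, hg r hr]
      at hw hz
    have := hmax q hq (by linarith [hmin q hq, hgw r hr])
    omega
  rw [mul_add, map_add, hag, add_zero, X_pow_eq, coeff_add_mul_monomial, mul_one]

lemma ldot_ge_of_mem_psSupp_X_pow_add {l : Fin 3 → ℤ}
    (hgw : ∀ q ∈ psSupp g, N * l 2 ≤ ldot l q) :
    ∀ q ∈ psSupp (X 2 ^ N + g), N * l 2 ≤ ldot l q := by
  intro q hq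
  rcases psSupp_add_subset _ _ hq with hq | hq
  · rw [psSupp_X_pow, Set.mem_singleton_iff] at hq
    rw [hq, ldot_single]
  · exact hgw q hq

lemma ldot_ge_of_sub_eq_mul (hg : ∀ q ∈ psSupp g, q 2 = 0) (hN : 0 < N)
    {l : Fin 3 → ℤ} (hl : ∀ i, 0 < l i) (hgw : ∀ q ∈ psSupp g, N * l 2 ≤ ldot l q) {k : ℤ}
    {h h' a : MvPowerSeries (Fin 3) ℂ} (hsub : h - h' = a * (X 2 ^ N + g))
    (hred : ∀ u ∈ psSupp h, N ≤ u 2 → k ≤ ldot l u) (h'k : ∀ u ∈ psSupp h', k ≤ ldot l u) :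
    ∀ u ∈ psSupp h, k ≤ ldot l u := by
  have hmul : ∀ u ∈ psSupp (a * (X 2 ^ N + g)), k ≤ ldot l u := by
    rcases eq_or_ne a 0 with rfl | ha
    · simp [psSupp]
    obtain ⟨p, hp, hmin, hmax⟩ := exists_ldot_min_coord_max hl ha
    have hv : p + Finsupp.single 2 N ∈ psSupp (h - h') := by
      rw [hsub, psSupp, Set.mem_ofPred_eq, coeff_add_single_mul_X_pow_add hg hN hgw hmin hmax]
      exact hp
    have hkv : k ≤ ldot l p + N * l 2 := by
      rw [← ldot_single, ← ldot_add]
      rcases psSupp_sub_subset h h' hv with hv | hv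
      · exact hred _ hv (by simp)
      · exact h'k _ hv
    intro u hu
    have := ldot_ge_of_mem_psSupp_mul hmin (ldot_ge_of_mem_psSupp_X_pow_add hgw) u hu
    linarith
  intro u hu
  rw [← sub_add_cancel h h', hsub] at hu
  rcases psSupp_add_subset _ _ hu with hu | hu
  · exact hmul u hu
  · exact h'k u hu

lemma exists_sub_mul_forall_ldot_ge (hg : ∀ q ∈ psSupp g, q 2 = 0) (hN : 0 < N)
    {ι : Type*} [Finite ι] {l : ι → Fin 3 → ℤ} (hl : ∀ n i, 0 < l n i)
    (hgw : ∀ n, ∀ q ∈ psSupp g, N * l n 2 ≤ ldot (l n) q) (k : ι → ℤ)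
    (h : MvPowerSeries (Fin 3) ℂ) :
    ∃ c, ∀ n a, (∀ u ∈ psSupp (h - a * (X 2 ^ N + g)), k n ≤ ldot (l n) u) →
      ∀ u ∈ psSupp (h - c * (X 2 ^ N + g)), k n ≤ ldot (l n) u := by
  obtain ⟨B, hB⟩ := (Set.finite_range k).bddAbove
  obtain ⟨c, hc⟩ := exists_sub_mul_psSupp_coord_ge hg hN B.toNat h
  refine ⟨c, fun n a ha => ldot_ge_of_sub_eq_mul hg hN (hl n) (hgw n) (a := a - c)
    (by ring) (fun u hu hNu => ?_) ha⟩
  have := coord_le_ldot (hl n) u 2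
  have := hc u hu hNu
  have := hB (Set.mem_range_self n)
  omega

end XPowAdd

lemma suspend_eq_X_pow_add (f₀ : MvPowerSeries (Fin 2) ℂ) (N : ℕ) :
    ∃ g, suspend f₀ N = X 2 ^ N + g ∧ ∀ q ∈ psSupp g, q 2 = 0 := by
  refine ⟨suspend f₀ N - X 2 ^ N, (add_sub_cancel _ _).symm, fun q hq => ?_⟩
  by_contra hq2
  apply hq
  rw [map_sub, coeff_X_pow, coeff_apply, suspend, if_neg hq2, zero_add, sub_self]

lemma IsCompactFacet.not_collinear {P F : Set (Fin 3 → ℝ)} (hF : IsCompactFacet P F) :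
    ¬ Collinear ℝ F := by
  rw [collinear_iff_finrank_le_one, hF.2.2]
  omega

/-- `g ∈ 𝓘(k)` says that one lift of `g` works for all facets; `g ∈ 𝓖(k)` that each facet has
its own lift, since the supremum defining `wt_n(g)` is taken over integers and `+∞`. -/
theorem suspension_image_eq_order_filtration_general
    (N : ℕ) (hN : 2 ≤ N)
    (f₀ : MvPowerSeries (Fin 2) ℂ)
    (NN : Type) [Fintype NN]
    (FF : NN → Set (Fin 3 → ℝ)) (ll : NN → Fin 3 → ℤ)
    (hfacet : ∀ n, IsCompactFacet (newtonPolyhedron (suspend f₀ N)) (FF n))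
    (hpos : ∀ n i, 0 < ll n i)
    (hmin : ∀ n, minSet (ll n) (newtonPolyhedron (suspend f₀ N)) = FF n)
    (k : NN → ℤ) :
    ∀ g : MvPowerSeries (Fin 3) ℂ ⧸ Ideal.span {suspend f₀ N},
      (∃ h : MvPowerSeries (Fin 3) ℂ,
          Ideal.Quotient.mk (Ideal.span {suspend f₀ N}) h = g ∧
          ∀ n, ∀ u ∈ psSupp h, k n ≤ ldot (ll n) u) ↔
      (∀ n, ∃ h : MvPowerSeries (Fin 3) ℂ,
          Ideal.Quotient.mk (Ideal.span {suspend f₀ N}) h = g ∧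
          ∀ u ∈ psSupp h, k n ≤ ldot (ll n) u) := by
  obtain ⟨g, hf, hg⟩ := suspend_eq_X_pow_add f₀ N
  have hgw : ∀ n, ∀ q ∈ psSupp g, N * ll n 2 ≤ ldot (ll n) q := fun n =>
    ldot_ge_of_not_collinear_minSet hg (by omega) (hpos n)
      (hf ▸ hmin n ▸ (hfacet n).not_collinear)
  rw [hf]
  intro G
  refine ⟨fun ⟨h, hh, hk⟩ n => ⟨h, hh, hk n⟩, fun hlifts => ?_⟩
  obtain ⟨h, rfl⟩ := Ideal.Quotient.mk_surjective G
  obtain ⟨c, hc⟩ := exists_sub_mul_forall_ldot_ge hg (by omega) hpos hgw k h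
  refine ⟨h - c * (X 2 ^ N + g), ?_, fun n => ?_⟩
  · refine Ideal.Quotient.eq.2 ?_
    simpa using Ideal.mul_mem_left _ c (Ideal.mem_span_singleton_self _)
  obtain ⟨h', hh', hk⟩ := hlifts n
  obtain ⟨a, ha⟩ := Ideal.mem_span_singleton'.1 (Ideal.Quotient.eq.1 hh'.symm)
  exact hc n a (by rwa [ha, sub_sub_cancel])

/-- Let `N ≥ 2` and `f = f₀(x,y) + z^N` where `f₀ ∈ ℂ[[x,y]]` is Newton
nondegenerate, `f₀(0,0) = 0`, and `f₀` is convenient.  Then for every `k ∈ ℤ^𝒩` the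
ideals `𝓘(k)` and `𝓖(k)` of `O_X = ℂ[[x,y,z]]/(f)` coincide.  Here `𝒩` is formalized as
a finite type `NN` enumerating the compact facets of `Γ₊(f)` with primitive inward
normals `ll n`; for `g ∈ O_X`, membership `g ∈ 𝓘(k)` is expressed by the existence of a
single lift `h` of `g` with `ŵt_n(h) ≥ k n` for all `n` (where `ŵt_n(h) ≥ k` iff every
`u ∈ supp h` has `ℓ_n·u ≥ k`, which also covers `ŵt_n(0) = +∞`), while `g ∈ 𝓖(k)`
(i.e. `wt_n(g) = sup {ŵt_n(h) : h ↦ g} ≥ k n` for all `n`) is expressed by the existence,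
for each `n` separately, of a lift `h` of `g` with `ŵt_n(h) ≥ k n`. -/
theorem suspension_image_eq_order_filtration
    (N : ℕ) (hN : 2 ≤ N)
    (f₀ : MvPowerSeries (Fin 2) ℂ) (hf₀ : f₀ ≠ 0)
    (hconst : MvPowerSeries.coeff 0 f₀ = 0)
    (hnd : NewtonNondeg2 f₀)
    (hconvX : ∃ a : ℕ, Finsupp.single (0 : Fin 2) a ∈ psSupp2 f₀)
    (hconvY : ∃ b : ℕ, Finsupp.single (1 : Fin 2) b ∈ psSupp2 f₀)
    (NN : Type) [Fintype NN]
    (FF : NN → Set (Fin 3 → ℝ)) (ll : NN → Fin 3 → ℤ)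
    (hfacet : ∀ n, IsCompactFacet (newtonPolyhedron (suspend f₀ N)) (FF n))
    (hinj : Function.Injective FF)
    (hsurj : ∀ G, IsCompactFacet (newtonPolyhedron (suspend f₀ N)) G → ∃ n, FF n = G)
    (hprim : ∀ n, Primitive (ll n))
    (hpos : ∀ n i, 0 < ll n i)
    (hmin : ∀ n, minSet (ll n) (newtonPolyhedron (suspend f₀ N)) = FF n)
    (k : NN → ℤ) :
    ∀ g : MvPowerSeries (Fin 3) ℂ ⧸ Ideal.span {suspend f₀ N},
      (∃ h : MvPowerSeries (Fin 3) ℂ,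
          Ideal.Quotient.mk (Ideal.span {suspend f₀ N}) h = g ∧
          ∀ n, ∀ u ∈ psSupp h, k n ≤ ldot (ll n) u) ↔
      (∀ n, ∃ h : MvPowerSeries (Fin 3) ℂ,
          Ideal.Quotient.mk (Ideal.span {suspend f₀ N}) h = g ∧
          ∀ u ∈ psSupp h, k n ≤ ldot (ll n) u) :=
  suspension_image_eq_order_filtration_general N hN f₀ NN FF ll hfacet hpos hmin k
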